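/- (M-projection scheme, convergence.) Let A = (a_{ij}) be an m×n matrix of nonnegative integers, c ∈ ℝ^n_{>0}, and define y_A(θ)_j := c_j Π_{i=1}^m θ_i^{a_{ij}} for θ ∈ ℝ^m_{≥0}. Fix x ∈ ℝ^n_{>0}, and let θ : [0,∞) → ℝ^m_{>0} be differentiable with θ̇(t) = A(x − y_A(θ(t))). Then θ̂ := lim_{t→∞} θ(t) exists in ℝ^m_{≥0}, and y_A(θ̂) is the M-projection of x to y_A(ℝ^m_{>0}): D(x‖y_A(θ̂)) ≤ D(x‖y_A(θ)) for every θ ∈ ℝ^m_{>0}. -/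

import Mathlib

/-- Extended relative entropy `D(x‖y)` (real-valued form, valid when `y` has
positive entries and `x` has nonnegative entries). -/
noncomputable def KL {ι : Type*} [Fintype ι] (x y : ι → ℝ) : ℝ :=
  ∑ i, (x i * Real.log (x i / y i) - x i + y i)

/-- The exponential-family parametrization `y_A(θ)_j = c_j ∏_i θ_i^{a_{ij}}`. -/
def yA {m n : ℕ} (A : Matrix (Fin m) (Fin n) ℕ) (c : Fin n → ℝ)
    (θ : Fin m → ℝ) : Fin n → ℝ :=
  fun j => c j * ∏ i, θ i ^ A i j

/-!
In the natural parameter `p = Aᵀ log θ` the objective `KL x (y_A θ)` is, up to a constant, the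
convex coercive function `W p = ∑ⱼ (cⱼ exp pⱼ - xⱼ pⱼ)`, which attains its minimum on the
subspace `range Aᵀ`, say at `Aᵀ log a`. Along the flow,
`d/dt KL (θ t) a = ⟨log θ - log a, A (x - y_A θ)⟩ ≤ W (Aᵀ log a) - W (Aᵀ log θ) ≤ 0`
by convexity of `W`, so this relative entropy is a Lyapunov function: it keeps `θ` bounded, and
the mean value theorem gives times at which the objective approaches its minimum. A limit point
`θ̂` of `θ` at those times is positive (a vanishing coordinate would send some `y_j` to `0` and
the objective to `∞`) and is again a minimizer, so `KL (θ t) θ̂` decreases and has a subsequence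
tending to `0`. It therefore tends to `0`, and it controls `|θ_i - θ̂_i|` through the Hellinger
bound `(√s - √a)² ≤ s log (s / a) - s + a`.
-/

open Real Filter Set Topology Matrix

section RelativeEntropy

variable {ι : Type*} [Fintype ι]

lemma sq_sqrt_sub_sqrt_le_mul_log_div {s a : ℝ} (hs : 0 ≤ s) (ha : 0 < a) :
    (√s - √a) ^ 2 ≤ s * log (s / a) - s + a := by
  rcases hs.eq_or_lt with rfl | hs
  · simp [sq_sqrt ha.le]
  have hu := sqrt_pos.2 hs
  have hv := sqrt_pos.2 ha
  -- `log (s / a) = 2 log (√s / √a) ≥ 2 (1 - √a / √s)`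
  have hlog : s / a = (√s / √a) ^ 2 := by rw [div_pow, sq_sqrt hs.le, sq_sqrt ha.le]
  have hbound := one_sub_inv_le_log_of_pos (div_pos hu hv)
  rw [inv_div] at hbound
  rw [hlog, log_pow]
  have key : s * (√a / √s) = √a * √s := by
    rw [mul_div_assoc', div_eq_iff hu.ne']
    linear_combination -√a * mul_self_sqrt hs.le
  nlinarith [sq_sqrt hs.le, sq_sqrt ha.le, mul_le_mul_of_nonneg_left hbound hs.le]

lemma abs_sub_le_of_sq_sqrt_sub_sqrt_le {s a D : ℝ} (hs : 0 ≤ s) (ha : 0 ≤ a)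
    (h : (√s - √a) ^ 2 ≤ D) : |s - a| ≤ √D * (2 * √a + √D) := by
  have hd : |√s - √a| ≤ √D := abs_le_sqrt h
  have hfactor : s - a = (√s - √a) * (√s + √a) := by
    linear_combination -sq_sqrt hs + sq_sqrt ha
  rw [hfactor, abs_mul, abs_of_nonneg (by positivity : 0 ≤ √s + √a)]
  have : √s + √a ≤ 2 * √a + √D := by linarith [le_abs_self (√s - √a)]
  exact mul_le_mul hd this (by positivity) (sqrt_nonneg _)

lemma klTerm_le_KL {x y : ι → ℝ} (hx : ∀ i, 0 ≤ x i) (hy : ∀ i, 0 < y i) (i : ι) :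
    x i * log (x i / y i) - x i + y i ≤ KL x y :=
  Finset.single_le_sum (f := fun i => x i * log (x i / y i) - x i + y i)
    (fun k _ => (sq_nonneg _).trans (sq_sqrt_sub_sqrt_le_mul_log_div (hx k) (hy k)))
    (Finset.mem_univ i)

lemma KL_nonneg {x y : ι → ℝ} (hx : ∀ i, 0 ≤ x i) (hy : ∀ i, 0 < y i) : 0 ≤ KL x y :=
  Finset.sum_nonneg fun i _ =>
    (sq_nonneg _).trans (sq_sqrt_sub_sqrt_le_mul_log_div (hx i) (hy i))

lemma KL_self (x : ι → ℝ) : KL x x = 0 := by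
  refine Finset.sum_eq_zero fun i _ => ?_
  rcases eq_or_ne (x i) 0 with h | h <;> simp [h]

lemma abs_sub_le_of_KL_le {x y : ι → ℝ} {D : ℝ} (hx : ∀ i, 0 ≤ x i) (hy : ∀ i, 0 < y i)
    (h : KL x y ≤ D) (i : ι) : |x i - y i| ≤ √D * (2 * √(y i) + √D) :=
  abs_sub_le_of_sq_sqrt_sub_sqrt_le (hx i) (hy i).le <|
    (sq_sqrt_sub_sqrt_le_mul_log_div (hx i) (hy i)).trans ((klTerm_le_KL hx hy i).trans h)

lemma div_exp_le_of_KL_le {x y : ι → ℝ} {C : ℝ} (hx : ∀ i, 0 < x i) (hy : ∀ i, 0 < y i)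
    (h : KL x y ≤ C) (i : ι) : x i / exp ((C + x i) / x i) ≤ y i := by
  have hterm := (klTerm_le_KL (fun k => (hx k).le) hy i).trans h
  have hlog : log (x i / y i) ≤ (C + x i) / x i := by
    rw [le_div_iff₀ (hx i)]; nlinarith [hy i]
  rw [div_le_iff₀ (exp_pos _), ← div_le_iff₀' (hy i)]
  calc x i / y i = exp (log (x i / y i)) := (exp_log (div_pos (hx i) (hy i))).symm
    _ ≤ _ := exp_le_exp.2 hlog

lemma ContinuousAt.KL {X : Type*} [TopologicalSpace X] {f g : X → ι → ℝ} {z : X}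
    (hf : ContinuousAt f z) (hg : ContinuousAt g z) (hf0 : ∀ i, f z i ≠ 0)
    (hg0 : ∀ i, g z i ≠ 0) : ContinuousAt (fun w => KL (f w) (g w)) z := by
  have hfi := continuousAt_pi.1 hf
  have hgi := continuousAt_pi.1 hg
  unfold _root_.KL
  refine tendsto_finsetSum _ fun i _ => ?_
  exact (((hfi i).mul (((hfi i).div (hgi i) (hg0 i)).log
    (div_ne_zero (hf0 i) (hg0 i)))).sub (hfi i)).add (hgi i)

lemma HasDerivAt.KL {f : ℝ → ι → ℝ} {f' a : ι → ℝ} {t : ℝ} (hf : HasDerivAt f f' t)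
    (hf0 : ∀ i, f t i ≠ 0) (ha : ∀ i, a i ≠ 0) :
    HasDerivAt (fun s => KL (f s) a) (∑ i, Real.log (f t i / a i) * f' i) t := by
  unfold _root_.KL
  refine HasDerivAt.fun_sum fun i _ => ?_
  have hfi := hasDerivAt_pi.1 hf i
  have hlog := (hfi.div_const (a i)).log (div_ne_zero (hf0 i) (ha i))
  refine (((hfi.mul hlog).sub hfi).add_const (a i)).congr_deriv ?_
  field_simp [hf0 i, ha i]
  ring

end RelativeEntropy

section ExpPotential

variable {ι : Type*} [Fintype ι]

noncomputable def expPotential (c x p : ι → ℝ) : ℝ :=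
  ∑ j, (c j * exp (p j) - x j * p j)

lemma continuous_expPotential (c x : ι → ℝ) : Continuous (expPotential c x) := by
  unfold expPotential; fun_prop

lemma KL_mul_exp {c : ι → ℝ} (hc : ∀ j, c j ≠ 0) (x p : ι → ℝ) :
    KL x (fun j => c j * exp (p j)) = KL x c - ∑ j, c j + expPotential c x p := by
  simp only [KL, expPotential, ← Finset.sum_sub_distrib, ← Finset.sum_add_distrib]
  refine Finset.sum_congr rfl fun j _ => ?_
  rcases eq_or_ne (x j) 0 with hx | hx
  · simp [hx]
  rw [← div_div, log_div (div_ne_zero hx (hc j)) (exp_pos _).ne', log_exp]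
  ring

/-- The gradient inequality of the convex function `expPotential c x`. -/
lemma sum_mul_sub_le_expPotential_sub {c : ι → ℝ} (hc : ∀ j, 0 ≤ c j) (x p q : ι → ℝ) :
    ∑ j, (x j - c j * exp (p j)) * (p j - q j) ≤ expPotential c x q - expPotential c x p := by
  rw [expPotential, expPotential, ← Finset.sum_sub_distrib]
  refine Finset.sum_le_sum fun j _ => ?_
  have htangent : exp (p j) * (1 + (q j - p j)) ≤ exp (q j) := by
    rw [← add_sub_cancel (p j) (q j), exp_add]
    exact mul_le_mul_of_nonneg_left (by linarith [add_one_le_exp (q j - p j)]) (exp_pos _).le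
  nlinarith [mul_le_mul_of_nonneg_left htangent (hc j)]

lemma mul_abs_sub_le_mul_exp_sub {c : ℝ} (hc : 0 < c) (x s : ℝ) :
    x * |s| - 2 * x ^ 2 / c ≤ c * exp s - x * s := by
  have hK : 0 ≤ 2 * x ^ 2 / c := by positivity
  rcases le_or_gt s 0 with hs | hs
  · rw [abs_of_nonpos hs]
    nlinarith [mul_pos hc (exp_pos s)]
  · rw [abs_of_pos hs, div_eq_mul_inv]
    have hq := mul_le_mul_of_nonneg_left (quadratic_le_exp_of_nonneg hs.le) hc.le
    have hsq : c * s ^ 2 / 2 - 2 * x * s + 2 * x ^ 2 * c⁻¹ = (c * s - 2 * x) ^ 2 * c⁻¹ / 2 := by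
      field_simp; ring
    nlinarith [mul_pos hc hs, (by positivity : 0 ≤ (c * s - 2 * x) ^ 2 * c⁻¹ / 2)]

lemma mul_abs_le_expPotential {c x : ι → ℝ} (hc : ∀ j, 0 < c j) (hx : ∀ j, 0 ≤ x j)
    (p : ι → ℝ) (j : ι) :
    x j * |p j| - ∑ k, 2 * x k ^ 2 / c k ≤ expPotential c x p :=
  calc x j * |p j| - ∑ k, 2 * x k ^ 2 / c k
      ≤ ∑ k, x k * |p k| - ∑ k, 2 * x k ^ 2 / c k := by
        gcongr
        exact Finset.single_le_sum (f := fun k => x k * |p k|)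
          (fun k _ => mul_nonneg (hx k) (abs_nonneg _)) (Finset.mem_univ j)
    _ ≤ expPotential c x p := by
        rw [← Finset.sum_sub_distrib]
        exact Finset.sum_le_sum fun k _ => mul_abs_sub_le_mul_exp_sub (hc k) (x k) (p k)

lemma isCompact_expPotential_le {c x : ι → ℝ} (hc : ∀ j, 0 < c j) (hx : ∀ j, 0 < x j)
    (C : ℝ) : IsCompact {p | expPotential c x p ≤ C} := by
  set R : ι → ℝ := fun j => (C + ∑ k, 2 * x k ^ 2 / c k) / x j
  refine (isCompact_univ_pi fun j => isCompact_Icc (a := -R j) (b := R j)).of_isClosed_subset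
    (isClosed_le (continuous_expPotential c x) continuous_const) fun p hp j _ => ?_
  have h := (mul_abs_le_expPotential hc (fun k => (hx k).le) p j).trans hp
  exact abs_le.1 ((le_div_iff₀' (hx j)).2 (by linarith))

lemma IsClosed.exists_isMinOn_expPotential {c x : ι → ℝ} (hc : ∀ j, 0 < c j)
    (hx : ∀ j, 0 < x j) {s : Set (ι → ℝ)} (hs : IsClosed s) (hne : s.Nonempty) :
    ∃ p ∈ s, IsMinOn (expPotential c x) s p := by
  obtain ⟨p₀, hp₀⟩ := hne
  refine (continuous_expPotential c x).continuousOn.exists_isMinOn' hs hp₀ ?_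
  refine mem_inf_of_left (mem_cocompact.2 ⟨_, isCompact_expPotential_le hc hx
    (expPotential c x p₀), fun p (hp : ¬ expPotential c x p ≤ _) => (not_le.1 hp).le⟩)

end ExpPotential

section ExponentialFamily

variable {m n : ℕ} (A : Matrix (Fin m) (Fin n) ℕ) (c x : Fin n → ℝ)

noncomputable def natParam (θ : Fin m → ℝ) : Fin n → ℝ :=
  (fun i => log (θ i)) ᵥ* A.map ((↑) : ℕ → ℝ)

noncomputable def flowField (θ : Fin m → ℝ) : Fin m → ℝ :=
  A.map ((↑) : ℕ → ℝ) *ᵥ (x - yA A c θ)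

def IsMProjectionParam (θ : Fin m → ℝ) : Prop :=
  (∀ i, 0 < θ i) ∧ ∀ θ' : Fin m → ℝ, (∀ i, 0 < θ' i) → KL x (yA A c θ) ≤ KL x (yA A c θ')

variable {A c x}

lemma continuous_yA : Continuous (yA A c) := by
  unfold yA; fun_prop

lemma pos_of_yA_ne_zero {θ : Fin m → ℝ} {i : Fin m} {j : Fin n} (hθ : 0 ≤ θ i)
    (hA : A i j ≠ 0) (hy : yA A c θ j ≠ 0) : 0 < θ i := by
  refine hθ.lt_of_ne fun h => hy ?_
  simp only [yA]
  rw [Finset.prod_eq_zero (Finset.mem_univ i) (by rw [← h, zero_pow hA]), mul_zero]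

lemma yA_eq_mul_exp_natParam {θ : Fin m → ℝ} (hθ : ∀ i, 0 < θ i) :
    yA A c θ = fun j => c j * exp (natParam A θ j) := by
  ext j
  simp only [yA, natParam, vecMul, dotProduct, map_apply, exp_sum]
  congr 1
  refine Finset.prod_congr rfl fun i _ => ?_
  rw [mul_comm, exp_nat_mul, exp_log (hθ i)]

lemma KL_yA_eq (hc : ∀ j, 0 < c j) {θ : Fin m → ℝ} (hθ : ∀ i, 0 < θ i) :
    KL x (yA A c θ) = KL x c - ∑ j, c j + expPotential c x (natParam A θ) := by
  rw [yA_eq_mul_exp_natParam hθ, KL_mul_exp fun j => (hc j).ne']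

/-- The left side is the derivative of `t ↦ KL (θ t) a` along the flow. -/
lemma sum_log_div_mul_flowField_le (hc : ∀ j, 0 < c j) {θ a : Fin m → ℝ}
    (hθ : ∀ i, 0 < θ i) (ha : ∀ i, 0 < a i) :
    ∑ i, log (θ i / a i) * flowField A c x θ i ≤ KL x (yA A c a) - KL x (yA A c θ) := by
  have hlog : (fun i => log (θ i / a i)) = (fun i => log (θ i)) - fun i => log (a i) := by
    ext i; exact log_div (hθ i).ne' (ha i).ne'
  have hsum : ∑ i, log (θ i / a i) * flowField A c x θ i =
      ∑ j, (x j - c j * exp (natParam A θ j)) * (natParam A θ j - natParam A a j) := by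
    change (fun i => log (θ i / a i)) ⬝ᵥ _ = _
    rw [flowField, Matrix.dotProduct_mulVec, hlog, Matrix.sub_vecMul, dotProduct_comm,
      yA_eq_mul_exp_natParam hθ]
    rfl
  rw [hsum, KL_yA_eq hc ha, KL_yA_eq hc hθ]
  linarith [sum_mul_sub_le_expPotential_sub (fun j => (hc j).le) x (natParam A θ) (natParam A a)]

variable (A)

lemma exists_isMProjectionParam (hc : ∀ j, 0 < c j) (hx : ∀ j, 0 < x j) :
    ∃ a, IsMProjectionParam A c x a := by
  have hclosed : IsClosed (Set.range fun u : Fin m → ℝ => u ᵥ* A.map ((↑) : ℕ → ℝ)) := by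
    rw [← Matrix.coe_vecMulLinear, ← LinearMap.coe_range]
    exact Submodule.closed_of_finiteDimensional _
  obtain ⟨_, ⟨u, rfl⟩, hmin⟩ :=
    hclosed.exists_isMinOn_expPotential hc hx (Set.range_nonempty _)
  have hpos : ∀ i, 0 < exp (u i) := fun i => exp_pos _
  refine ⟨fun i => exp (u i), hpos, fun θ' hθ' => ?_⟩
  rw [KL_yA_eq hc hpos, KL_yA_eq hc hθ']
  have hu : natParam A (fun i => exp (u i)) = u ᵥ* A.map ((↑) : ℕ → ℝ) := by
    simp only [natParam, log_exp]
  have h : expPotential c x (u ᵥ* A.map ((↑) : ℕ → ℝ)) ≤ expPotential c x (natParam A θ') :=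
    hmin (Set.mem_range_self _)
  rw [hu]
  exact add_le_add_right h _

end ExponentialFamily

section Calculus

variable {f f' : ℝ → ℝ}

lemma antitoneOn_Ici_of_hasDerivAt_nonpos (hf : ∀ t, 0 ≤ t → HasDerivAt f (f' t) t)
    (hf' : ∀ t, 0 ≤ t → f' t ≤ 0) : AntitoneOn f (Ici 0) := by
  refine antitoneOn_of_hasDerivWithinAt_nonpos (f' := f') (convex_Ici 0)
    (fun t ht => (hf t ht).continuousAt.continuousWithinAt) (fun t ht => ?_) fun t ht => ?_
  all_goals rw [interior_Ici] at ht
  exacts [(hf t ht.le).hasDerivWithinAt, hf' t ht.le]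

lemma eq_of_hasDerivAt_zero (hf : ∀ t, 0 ≤ t → HasDerivAt f 0 t) {t : ℝ} (ht : 0 ≤ t) :
    f t = f 0 :=
  constant_of_has_deriv_right_zero (fun s hs => (hf s hs.1).continuousAt.continuousWithinAt)
    (fun s hs => (hf s hs.1).hasDerivWithinAt) t ⟨ht, le_rfl⟩

/-- By the mean value theorem, `f' (ξ k) = f (k + 1) - f k` for some `ξ k ∈ (k, k + 1)`, and
these differences tend to `0` because `f k` decreases and is bounded below. -/
lemma exists_seq_tendsto_deriv_zero (hf : ∀ t, 0 ≤ t → HasDerivAt f (f' t) t)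
    (hf' : ∀ t, 0 ≤ t → f' t ≤ 0) (hf0 : ∀ t, 0 ≤ t → 0 ≤ f t) :
    ∃ ξ : ℕ → ℝ, (∀ k : ℕ, (k : ℝ) ≤ ξ k) ∧ Tendsto (fun k => f' (ξ k)) atTop (𝓝 0) := by
  have hmvt : ∀ k : ℕ, ∃ s ∈ Ioo (k : ℝ) (k + 1), f' s = f (k + 1) - f k := by
    intro k
    obtain ⟨s, hs, h⟩ := exists_hasDerivAt_eq_slope f f' (lt_add_one (k : ℝ))
      (fun t ht => (hf t ((Nat.cast_nonneg k).trans ht.1)).continuousAt.continuousWithinAt)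
      fun t ht => hf t ((Nat.cast_nonneg k).trans ht.1.le)
    exact ⟨s, hs, by rwa [add_sub_cancel_left, div_one] at h⟩
  choose ξ hξ hslope using hmvt
  have hanti : Antitone fun k : ℕ => f k :=
    antitone_nat_of_succ_le fun k : ℕ => by
      have := hf' (ξ k) ((Nat.cast_nonneg k).trans (hξ k).1.le)
      push_cast; linarith [hslope k]
  have hlim := tendsto_atTop_ciInf hanti ⟨0, by rintro _ ⟨k, rfl⟩; exact hf0 k (Nat.cast_nonneg k)⟩
  refine ⟨ξ, fun k => (hξ k).1.le, ?_⟩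
  simp_rw [hslope]
  simpa using ((tendsto_add_atTop_iff_nat 1).2 hlim).sub hlim

lemma tendsto_zero_of_antitoneOn_of_tendsto_comp (hanti : AntitoneOn f (Ici 0))
    (hf0 : ∀ t, 0 ≤ t → 0 ≤ f t) {ξ : ℕ → ℝ} (hξ : ∀ k, 0 ≤ ξ k)
    (hlim : Tendsto (fun k => f (ξ k)) atTop (𝓝 0)) : Tendsto f atTop (𝓝 0) := by
  refine tendsto_order.2 ⟨fun a ha => ?_, fun a ha => ?_⟩
  · exact eventually_atTop.2 ⟨0, fun t ht => ha.trans_le (hf0 t ht)⟩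
  · obtain ⟨k, hk⟩ : ∃ k : ℕ, f (ξ k) < a := (hlim.eventually (gt_mem_nhds ha)).exists
    exact eventually_atTop.2 ⟨ξ k, fun t ht => (hanti (hξ k) ((hξ k).trans ht) ht).trans_lt hk⟩

end Calculus

section Flow

variable {m n : ℕ} {A : Matrix (Fin m) (Fin n) ℕ} {c x : Fin n → ℝ} {θ : ℝ → Fin m → ℝ}
  (hc : ∀ j, 0 < c j) (hx : ∀ j, 0 < x j)
  (hθpos : ∀ t, 0 ≤ t → ∀ i, 0 < θ t i)
  (hode : ∀ t, 0 ≤ t → HasDerivAt θ (flowField A c x (θ t)) t)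
include hode

lemma flow_apply_eq_of_row_eq_zero {i : Fin m} (hrow : ∀ j, A i j = 0) {t : ℝ} (ht : 0 ≤ t) :
    θ t i = θ 0 i :=
  eq_of_hasDerivAt_zero (fun s hs => by
    simpa [flowField, mulVec, dotProduct, hrow] using hasDerivAt_pi.1 (hode s hs) i) ht

include hc hθpos

lemma antitoneOn_KL_flow {a : Fin m → ℝ} (ha : IsMProjectionParam A c x a) :
    AntitoneOn (fun t => KL (θ t) a) (Ici 0) :=
  antitoneOn_Ici_of_hasDerivAt_nonpos
    (fun t ht => (hode t ht).KL (fun i => (hθpos t ht i).ne') fun i => (ha.1 i).ne')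
    fun t ht => (sum_log_div_mul_flowField_le hc (hθpos t ht) ha.1).trans
      (sub_nonpos.2 (ha.2 _ (hθpos t ht)))

lemma flow_mem_pi_Icc {a : Fin m → ℝ} (ha : IsMProjectionParam A c x a) {t : ℝ} (ht : 0 ≤ t) :
    θ t ∈ univ.pi fun i => Icc 0 (a i + √(KL (θ 0) a) * (2 * √(a i) + √(KL (θ 0) a))) := by
  intro i _
  have hKL : KL (θ t) a ≤ KL (θ 0) a :=
    antitoneOn_KL_flow hc hθpos hode ha self_mem_Ici ht ht
  have hclose := abs_sub_le_of_KL_le (fun i => (hθpos t ht i).le) ha.1 hKL i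
  exact ⟨(hθpos t ht i).le, by linarith [le_abs_self (θ t i - a i)]⟩

lemma exists_seq_KL_yA_flow_tendsto {a : Fin m → ℝ} (ha : IsMProjectionParam A c x a) :
    ∃ ξ : ℕ → ℝ, (∀ k : ℕ, (k : ℝ) ≤ ξ k) ∧
      Tendsto (fun k => KL x (yA A c (θ (ξ k)))) atTop (𝓝 (KL x (yA A c a))) := by
  have hderiv t (ht : 0 ≤ t) :=
    (hode t ht).KL (fun i => (hθpos t ht i).ne') fun i => (ha.1 i).ne'
  have hle t (ht : 0 ≤ t) := sum_log_div_mul_flowField_le (A := A) (x := x) hc (hθpos t ht) ha.1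
  obtain ⟨ξ, hξ, hlim⟩ := exists_seq_tendsto_deriv_zero hderiv
    (fun t ht => (hle t ht).trans (sub_nonpos.2 (ha.2 _ (hθpos t ht))))
    fun t ht => KL_nonneg (fun i => (hθpos t ht i).le) ha.1
  refine ⟨ξ, hξ, ?_⟩
  have hξ0 k : 0 ≤ ξ k := (Nat.cast_nonneg k).trans (hξ k)
  have hgap : Tendsto (fun k => KL x (yA A c (θ (ξ k))) - KL x (yA A c a)) atTop (𝓝 0) :=
    squeeze_zero (g := fun k => -∑ i, log (θ (ξ k) i / a i) * flowField A c x (θ (ξ k)) i)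
      (fun k => sub_nonneg.2 (ha.2 _ (hθpos _ (hξ0 k))))
      (fun k => by linarith [hle _ (hξ0 k)]) (by simpa using hlim.neg)
  simpa using hgap.add_const (KL x (yA A c a))

lemma tendsto_flow_of_tendsto_comp {θhat : Fin m → ℝ} (hθhat : IsMProjectionParam A c x θhat)
    {ξ : ℕ → ℝ} (hξ : ∀ k, 0 ≤ ξ k) (hlim : Tendsto (fun k => θ (ξ k)) atTop (𝓝 θhat)) :
    Tendsto θ atTop (𝓝 θhat) := by
  have hKL : Tendsto (fun t => KL (θ t) θhat) atTop (𝓝 0) := by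
    refine tendsto_zero_of_antitoneOn_of_tendsto_comp (antitoneOn_KL_flow hc hθpos hode hθhat)
      (fun t ht => KL_nonneg (fun i => (hθpos t ht i).le) hθhat.1) hξ ?_
    have hcont : ContinuousAt (fun θ' => KL θ' θhat) θhat :=
      continuousAt_id.KL continuousAt_const (fun i => (hθhat.1 i).ne') fun i => (hθhat.1 i).ne'
    rw [← KL_self θhat]
    exact hcont.tendsto.comp hlim
  refine tendsto_pi_nhds.2 fun i => tendsto_iff_norm_sub_tendsto_zero.2 ?_
  refine squeeze_zero' (Eventually.of_forall fun t => norm_nonneg _)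
    (eventually_atTop.2 ⟨0, fun t ht => abs_sub_le_of_KL_le (fun i => (hθpos t ht i).le)
      hθhat.1 le_rfl i⟩) ?_
  simpa using (hKL.sqrt.mul ((hKL.sqrt.const_add (2 * √(θhat i)))))

include hx

/-- A limit point along the flow is positive: a zero row of `A` freezes its coordinate, and
otherwise a vanishing coordinate would send some `yA _ j` to `0` and the objective to `∞`. -/
lemma pos_of_tendsto_flow_comp {ξ : ℕ → ℝ} (hξ : ∀ k, 0 ≤ ξ k) {θhat : Fin m → ℝ}
    (hlim : Tendsto (fun k => θ (ξ k)) atTop (𝓝 θhat)) {C : ℝ}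
    (hC : ∀ᶠ k in atTop, KL x (yA A c (θ (ξ k))) ≤ C) (i : Fin m) : 0 < θhat i := by
  have hθhat_nonneg : 0 ≤ θhat i :=
    ge_of_tendsto (tendsto_pi_nhds.1 hlim i) (Eventually.of_forall fun k => (hθpos _ (hξ k) i).le)
  by_cases hrow : ∀ j, A i j = 0
  · have hconst : Tendsto (fun k => θ (ξ k) i) atTop (𝓝 (θ 0 i)) := by
      simp only [flow_apply_eq_of_row_eq_zero hode hrow (hξ _), tendsto_const_nhds]
    rw [tendsto_nhds_unique (tendsto_pi_nhds.1 hlim i) hconst]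
    exact hθpos 0 le_rfl i
  obtain ⟨j, hj⟩ := not_forall.1 hrow
  have hy : x j / exp ((C + x j) / x j) ≤ yA A c θhat j := by
    refine ge_of_tendsto (tendsto_pi_nhds.1 ((continuous_yA.tendsto θhat).comp hlim) j) ?_
    filter_upwards [hC] with k hk
    have hpos : ∀ i, 0 < θ (ξ k) i := hθpos _ (hξ k)
    refine div_exp_le_of_KL_le hx (fun j => ?_) hk j
    rw [yA_eq_mul_exp_natParam hpos]
    exact mul_pos (hc j) (exp_pos _)
  exact pos_of_yA_ne_zero hθhat_nonneg hj ((div_pos (hx j) (exp_pos _)).trans_le hy).ne'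

lemma exists_isMProjectionParam_tendsto_flow_comp :
    ∃ θhat, IsMProjectionParam A c x θhat ∧ ∃ ξ : ℕ → ℝ, (∀ k, 0 ≤ ξ k) ∧
      Tendsto (fun k => θ (ξ k)) atTop (𝓝 θhat) := by
  obtain ⟨a, ha⟩ := exists_isMProjectionParam A hc hx
  obtain ⟨ξ, hξ, hKL⟩ := exists_seq_KL_yA_flow_tendsto hc hθpos hode ha
  have hξ0 k : 0 ≤ ξ k := (Nat.cast_nonneg k).trans (hξ k)
  obtain ⟨θhat, -, φ, hφ, hlim⟩ := (isCompact_univ_pi fun i => isCompact_Icc).tendsto_subseq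
    fun k => flow_mem_pi_Icc hc hθpos hode ha (hξ0 k)
  have hKLφ := hKL.comp hφ.tendsto_atTop
  have hpos := pos_of_tendsto_flow_comp hc hx hθpos hode (fun k => hξ0 (φ k)) hlim
    (hKLφ.eventually (eventually_le_nhds (lt_add_one _)))
  have hy j : yA A c θhat j ≠ 0 := by
    rw [yA_eq_mul_exp_natParam hpos]; exact (mul_pos (hc j) (exp_pos _)).ne'
  have hKLhat : KL x (yA A c θhat) = KL x (yA A c a) :=
    tendsto_nhds_unique ((continuousAt_const.KL continuous_yA.continuousAt
      (fun j => (hx j).ne') hy).tendsto.comp hlim) hKLφ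
  exact ⟨θhat, ⟨hpos, fun θ' hθ' => hKLhat ▸ ha.2 θ' hθ'⟩, ξ ∘ φ, fun k => hξ0 (φ k), hlim⟩

end Flow

/-- M-projection scheme, convergence: a trajectory of
`θ̇ = A(x − y_A(θ))` converges to some `θ̂ ∈ ℝ^m_{≥0}`, and `y_A(θ̂)` is the
M-projection of `x` to `y_A(ℝ^m_{>0})`. -/
theorem mprojection_converges
    {m n : ℕ} (A : Matrix (Fin m) (Fin n) ℕ) (c : Fin n → ℝ)
    (hc : ∀ j, 0 < c j)
    (x : Fin n → ℝ) (hx : ∀ j, 0 < x j)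
    (θ : ℝ → Fin m → ℝ)
    (hθpos : ∀ t, 0 ≤ t → ∀ i, 0 < θ t i)
    (hode : ∀ t, 0 ≤ t → HasDerivAt θ
      (fun i => ∑ j, (A i j : ℝ) * (x j - yA A c (θ t) j)) t) :
    ∃ θhat : Fin m → ℝ,
      (∀ i, 0 ≤ θhat i) ∧
      Filter.Tendsto θ Filter.atTop (nhds θhat) ∧
      ∀ θ' : Fin m → ℝ, (∀ i, 0 < θ' i) →
        KL x (yA A c θhat) ≤ KL x (yA A c θ') := by
  have hflow : ∀ t, 0 ≤ t → HasDerivAt θ (flowField A c x (θ t)) t := hode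
  obtain ⟨θhat, hθhat, ξ, hξ, hlim⟩ :=
    exists_isMProjectionParam_tendsto_flow_comp hc hx hθpos hflow
  exact ⟨θhat, fun i => (hθhat.1 i).le,
    tendsto_flow_of_tendsto_comp hc hθpos hflow hθhat hξ hlim, hθhat.2⟩
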